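/- For finite multisets over a finite linearly ordered type T with elements t₁ < t₂ < ... < tₙ, the recursive multiset ordering ≼ coincides with the lexicographic ordering of the negated-frequency (occurrence) vectors: m₁ ≼ m₂ iff the tuple (−freq(m₁,t₁), ..., −freq(m₁,tₙ)) is lexicographically ≤ the tuple (−freq(m₂,t₁), ..., −freq(m₂,tₙ)). -/
import Mathlib

private lemma min_mem_of_ne {T : Type*} [LinearOrder T] (m : Multiset T) (h : m ≠ 0) :
    ∃ a, a ∈ m ∧ ∀ x ∈ m, a ≤ x := by
  have hne : m.toFinset.Nonempty := Multiset.toFinset_nonempty.mpr h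
  refine ⟨m.toFinset.min' hne, ?_, ?_⟩
  · exact Multiset.mem_toFinset.mp (m.toFinset.min'_mem hne)
  · intro x hx; exact m.toFinset.min'_le x (Multiset.mem_toFinset.mpr hx)

private lemma key {T : Type*} [LinearOrder T]
    (r : Multiset T → Multiset T → Prop)
    (hr : ∀ m₁ m₂ : Multiset T, r m₁ m₂ ↔
      (m₂ = 0 ∨
        ∃ a b : T, a ∈ m₁ ∧ b ∈ m₂ ∧ (∀ x ∈ m₁, a ≤ x) ∧ (∀ y ∈ m₂, b ≤ y) ∧
          (a < b ∨ (a = b ∧ r (m₁.erase a) (m₂.erase b))))) :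
    ∀ n (m₁ m₂ : Multiset T), Multiset.card m₁ + Multiset.card m₂ ≤ n →
      (r m₁ m₂ ↔ ((∀ t, m₁.count t = m₂.count t) ∨
        ∃ t, (∀ s, s < t → m₁.count s = m₂.count s) ∧ m₂.count t < m₁.count t)) := by
  intro n
  induction n with
  | zero =>
    intro m₁ m₂ hc
    have h1 : m₁ = 0 := by
      rw [← Multiset.card_eq_zero]; omega
    have h2 : m₂ = 0 := by
      rw [← Multiset.card_eq_zero]; omega
    subst h1; subst h2
    rw [hr 0 0]
    simp
  | succ n ih =>
    intro m₁ m₂ hc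
    by_cases h2 : m₂ = 0
    · subst h2
      constructor
      · intro _
        by_cases h1 : m₁ = 0
        · subst h1; left; intro t; rfl
        · obtain ⟨a, ha, hmin⟩ := min_mem_of_ne m₁ h1
          right; refine ⟨a, ?_, ?_⟩
          · intro s hs
            have : s ∉ m₁ := fun hmem => absurd (hmin s hmem) (not_le.mpr hs)
            simp [Multiset.count_eq_zero_of_notMem this]
          · simp [Multiset.count_pos.mpr ha]
      · intro _; rw [hr]; left; rfl
    · by_cases h1 : m₁ = 0
      · constructor
        · intro hrr
          rw [hr] at hrr
          rcases hrr with h | ⟨a, b, ha, _⟩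
          · exact absurd h h2
          · subst h1; exact absurd ha (Multiset.notMem_zero a)
        · intro hP
          exfalso
          obtain ⟨b, hb⟩ := Multiset.exists_mem_of_ne_zero h2
          rcases hP with heq | ⟨t, _, hlt⟩
          · have := heq b
            subst h1
            simp [Multiset.count_eq_zero_of_notMem (Multiset.notMem_zero b)] at this
            exact absurd (Multiset.count_pos.mpr hb) (by omega)
          · subst h1
            simp at hlt
      · -- both nonempty
        obtain ⟨a, ha, hamin⟩ := min_mem_of_ne m₁ h1
        obtain ⟨b, hb, hbmin⟩ := min_mem_of_ne m₂ h2
        have hbelow1 : ∀ s, s < a → m₁.count s = 0 := fun s hs =>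
          Multiset.count_eq_zero_of_notMem (fun hmem => absurd (hamin s hmem) (not_le.mpr hs))
        have hbelow2 : ∀ s, s < b → m₂.count s = 0 := fun s hs =>
          Multiset.count_eq_zero_of_notMem (fun hmem => absurd (hbmin s hmem) (not_le.mpr hs))
        have hstep : r m₁ m₂ ↔ (a < b ∨ (a = b ∧ r (m₁.erase a) (m₂.erase b))) := by
          rw [hr]
          constructor
          · rintro (h | ⟨a', b', ha', hb', hamin', hbmin', hcond⟩)
            · exact absurd h h2
            · have haa : a' = a := le_antisymm (hamin' a ha) (hamin a' ha')
              have hbb : b' = b := le_antisymm (hbmin' b hb) (hbmin b' hb')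
              subst haa; subst hbb; exact hcond
          · intro h; right; exact ⟨a, b, ha, hb, hamin, hbmin, h⟩
        rw [hstep]
        rcases lt_trichotomy a b with hab | hab | hab
        · constructor
          · intro _
            right; refine ⟨a, ?_, ?_⟩
            · intro s hs
              rw [hbelow1 s hs, hbelow2 s (hs.trans hab)]
            · rw [hbelow2 a hab]
              exact Multiset.count_pos.mpr ha
          · intro _; left; exact hab
        · subst hab
          simp only [lt_self_iff_false, false_or, true_and]
          have hca : 1 ≤ m₁.count a := Multiset.count_pos.mpr ha
          have hcb : 1 ≤ m₂.count a := Multiset.count_pos.mpr hb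
          have hcard : Multiset.card (m₁.erase a) + Multiset.card (m₂.erase a) ≤ n := by
            simp only [Multiset.card_erase_of_mem ha, Multiset.card_erase_of_mem hb,
              Nat.pred_eq_sub_one]
            have c1 : 1 ≤ Multiset.card m₁ := Multiset.card_pos.mpr h1
            have c2 : 1 ≤ Multiset.card m₂ := Multiset.card_pos.mpr h2
            omega
          rw [ih (m₁.erase a) (m₂.erase a) hcard]
          have heqiff : ∀ s, ((m₁.erase a).count s = (m₂.erase a).count s ↔ m₁.count s = m₂.count s) := by
            intro s
            by_cases hs : s = a
            · subst hs
              rw [Multiset.count_erase_self, Multiset.count_erase_self]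
              omega
            · rw [Multiset.count_erase_of_ne hs, Multiset.count_erase_of_ne hs]
          have hltiff : ∀ s, ((m₂.erase a).count s < (m₁.erase a).count s ↔ m₂.count s < m₁.count s) := by
            intro s
            by_cases hs : s = a
            · subst hs
              rw [Multiset.count_erase_self, Multiset.count_erase_self]
              omega
            · rw [Multiset.count_erase_of_ne hs, Multiset.count_erase_of_ne hs]
          constructor
          · rintro (h | ⟨t, hbel, hlt⟩)
            · exact Or.inl (fun t => (heqiff t).mp (h t))
            · exact Or.inr ⟨t, fun s hs => (heqiff s).mp (hbel s hs), (hltiff t).mp hlt⟩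
          · rintro (h | ⟨t, hbel, hlt⟩)
            · exact Or.inl (fun t => (heqiff t).mpr (h t))
            · exact Or.inr ⟨t, fun s hs => (heqiff s).mpr (hbel s hs), (hltiff t).mpr hlt⟩
        · -- b < a : r false, P false
          constructor
          · rintro (h | ⟨h, _⟩)
            · exact absurd h (not_lt_of_gt hab)
            · exact absurd h (ne_of_gt hab)
          · rintro (heq | ⟨t, hbel, hlt⟩)
            · exfalso
              have := heq b
              rw [hbelow1 b hab] at this
              exact absurd (Multiset.count_pos.mpr hb) (by omega)
            · exfalso
              rcases lt_or_ge b t with htb | htb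
              · have := hbel b htb
                rw [hbelow1 b hab] at this
                exact absurd (Multiset.count_pos.mpr hb) (by omega)
              · have : m₁.count t = 0 := hbelow1 t (lt_of_le_of_lt htb hab)
                omega

/-- Over a finite linearly ordered type, the recursive multiset ordering
coincides with the lexicographic ordering of the negated-frequency
(occurrence) vectors. -/
theorem stmt8 {T : Type*} [Fintype T] [LinearOrder T]
    (r : Multiset T → Multiset T → Prop)
    (hr : ∀ m₁ m₂ : Multiset T, r m₁ m₂ ↔
      (m₂ = 0 ∨
        ∃ a b : T, a ∈ m₁ ∧ b ∈ m₂ ∧ (∀ x ∈ m₁, a ≤ x) ∧ (∀ y ∈ m₂, b ≤ y) ∧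
          (a < b ∨ (a = b ∧ r (m₁.erase a) (m₂.erase b))))) :
    ∀ m₁ m₂ : Multiset T, r m₁ m₂ ↔
      ((fun t => -(m₁.count t : ℤ)) = (fun t => -(m₂.count t : ℤ)) ∨
        Pi.Lex (· < ·) (fun {_} => (· < ·))
          (fun t => -(m₁.count t : ℤ)) (fun t => -(m₂.count t : ℤ))) := by
  intro m₁ m₂
  rw [key r hr (Multiset.card m₁ + Multiset.card m₂) m₁ m₂ le_rfl]
  constructor
  · rintro (h | ⟨t, hbel, hlt⟩)
    · left; funext t; rw [h t]
    · right
      refine ⟨t, ?_, ?_⟩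
      · intro s hs; dsimp only; rw [hbel s hs]
      · simp only [neg_lt_neg_iff, Int.ofNat_lt]
        exact_mod_cast hlt
  · rintro (h | ⟨t, hbel, hlt⟩)
    · left; intro t
      have := congrFun h t
      simpa using this
    · right
      refine ⟨t, ?_, ?_⟩
      · intro s hs
        have := hbel s hs
        simpa using this
      · simp only [neg_lt_neg_iff] at hlt
        exact_mod_cast hlt
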